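/- arXiv:2406.04793 — 7 statements merged into one kernel-verified Lean document; each statement's English description precedes it below -/
import Mathlib

section
/- Let u_1,…,u_N be pairwise distinct elements of a linear order with true ranks R(u_i) = #{j : u_j ≤ u_i}, forming a permutation of {1,…,N}, and let R̂(u_i) be predicted ranks with |R(u_i) − R̂(u_i)| ≤ η for all i. Then for every i, the rank of R̂(u_i) among all predictions, r̂_i = #{j : R̂(u_j) ≤ R̂(u_i)}, satisfies |R(u_i) − r̂_i| ≤ 2η. -/
theorem stmt_7 {α : Type*} [LinearOrder α] (N : ℕ) (u : Fin N → α)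
    (hu : Function.Injective u) (Rhat : Fin N → ℤ) (η : ℤ)
    (herr : ∀ i, |((Finset.univ.filter fun j => u j ≤ u i).card : ℤ) - Rhat i| ≤ η) :
    ∀ i, |((Finset.univ.filter fun j => u j ≤ u i).card : ℤ)
        - ((Finset.univ.filter fun j => Rhat j ≤ Rhat i).card : ℤ)| ≤ 2 * η := by
  intro i
  set R : Fin N → ℤ := fun i => ((Finset.univ.filter fun j => u j ≤ u i).card : ℤ) with hRdef
  -- monotonicity of R
  have hmono : ∀ a b : Fin N, u a ≤ u b ↔ R a ≤ R b := by
    intro a b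
    constructor
    · intro h
      have : (Finset.univ.filter fun j => u j ≤ u a) ⊆
          (Finset.univ.filter fun j => u j ≤ u b) := by
        intro k hk
        simp only [Finset.mem_filter, Finset.mem_univ, true_and] at hk ⊢
        exact le_trans hk h
      simp only [hRdef]
      exact_mod_cast Finset.card_le_card this
    · intro h
      by_contra hba
      have hlt : u b < u a := lt_of_not_ge hba
      have hss : (Finset.univ.filter fun j => u j ≤ u b) ⊂
          (Finset.univ.filter fun j => u j ≤ u a) := by
        refine Finset.ssubset_iff_of_subset ?_ |>.2 ?_
        · intro k hk
          simp only [Finset.mem_filter, Finset.mem_univ, true_and] at hk ⊢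
          exact le_trans hk hlt.le
        · exact ⟨a, by simp, by simp [not_le.2 hlt]⟩
      have := Finset.card_lt_card hss
      have : R b < R a := by simp only [hRdef]; exact_mod_cast this
      omega
  have hRinj : Function.Injective R := by
    intro a b hab
    exact hu (le_antisymm ((hmono a b).2 hab.le) ((hmono b a).2 hab.ge))
  -- range of R is Icc 1 N
  have hmem : ∀ a, R a ∈ Finset.Icc (1 : ℤ) N := by
    intro a
    simp only [Finset.mem_Icc]
    constructor
    · have h : 0 < (Finset.univ.filter fun j => u j ≤ u a).card :=
        Finset.card_pos.2 ⟨a, by simp⟩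
      simp only [hRdef]
      exact_mod_cast h
    · have h : (Finset.univ.filter fun j => u j ≤ u a).card ≤ N := by
        simpa using Finset.card_filter_le Finset.univ (fun j => u j ≤ u a)
      simp only [hRdef]
      exact_mod_cast h
  have himg : Finset.univ.image R = Finset.Icc (1 : ℤ) N := by
    apply Finset.eq_of_subset_of_card_le
    · intro x hx
      obtain ⟨a, _, rfl⟩ := Finset.mem_image.1 hx
      exact hmem a
    · rw [Finset.card_image_of_injective _ hRinj]
      simp [Int.toNat_of_nonneg]
  -- counting lemma
  have hcount : ∀ c : ℤ, ((Finset.univ.filter fun j => R j ≤ c).card : ℤ)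
      = (min (N : ℤ) c).toNat := by
    intro c
    have h1 : (Finset.univ.image R).filter (· ≤ c)
        = (Finset.univ.filter fun j => R j ≤ c).image R := by
      rw [Finset.filter_image]
    have h2 : ((Finset.univ.filter fun j => R j ≤ c).image R).card
        = (Finset.univ.filter fun j => R j ≤ c).card :=
      Finset.card_image_of_injective _ hRinj
    have h3 : (Finset.Icc (1 : ℤ) N).filter (· ≤ c) = Finset.Icc (1 : ℤ) (min (N : ℤ) c) := by
      ext x
      simp only [Finset.mem_filter, Finset.mem_Icc, le_min_iff]
      tauto
    have : ((Finset.univ.filter fun j => R j ≤ c).card : ℤ)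
        = ((Finset.Icc (1 : ℤ) (min (N : ℤ) c)).card : ℤ) := by
      rw [← h2, ← h1, himg, h3]
    rw [this, Int.card_Icc]
    simp
  have hηnn : 0 ≤ η := le_trans (abs_nonneg _) (herr i)
  have herr' : ∀ a, |R a - Rhat a| ≤ η := herr
  set rhat : ℤ := ((Finset.univ.filter fun j => Rhat j ≤ Rhat i).card : ℤ) with hrhat
  have hRiN : R i ≤ N ∧ 1 ≤ R i := by
    have := hmem i; simp only [Finset.mem_Icc] at this; exact ⟨this.2, this.1⟩
  -- lower bound: R i - 2η ≤ rhat
  have hlow : R i - 2 * η ≤ rhat := by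
    have hsub : (Finset.univ.filter fun j => R j ≤ R i - 2 * η) ⊆
        (Finset.univ.filter fun j => Rhat j ≤ Rhat i) := by
      intro k hk
      simp only [Finset.mem_filter, Finset.mem_univ, true_and] at hk ⊢
      have h1 := abs_le.1 (herr' k)
      have h2 := abs_le.1 (herr' i)
      omega
    have hc := Finset.card_le_card hsub
    have hc' : ((Finset.univ.filter fun j => R j ≤ R i - 2 * η).card : ℤ) ≤ rhat := by
      simp only [hrhat]; exact_mod_cast hc
    have := hcount (R i - 2 * η)
    have hmin : R i - 2 * η ≤ ((min (N : ℤ) (R i - 2 * η)).toNat : ℤ) := by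
      omega
    omega
  -- upper bound: rhat ≤ R i + 2η
  have hup : rhat ≤ R i + 2 * η := by
    have hsub : (Finset.univ.filter fun j => Rhat j ≤ Rhat i) ⊆
        (Finset.univ.filter fun j => R j ≤ R i + 2 * η) := by
      intro k hk
      simp only [Finset.mem_filter, Finset.mem_univ, true_and] at hk ⊢
      have h1 := abs_le.1 (herr' k)
      have h2 := abs_le.1 (herr' i)
      omega
    have hc : rhat ≤ ((Finset.univ.filter fun j => R j ≤ R i + 2 * η).card : ℤ) := by
      simp only [hrhat]; exact_mod_cast Finset.card_le_card hsub
    have := hcount (R i + 2 * η)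
    have hmin : ((min (N : ℤ) (R i + 2 * η)).toNat : ℤ) ≤ R i + 2 * η := by
      omega
    omega
  have hRi : ((Finset.univ.filter fun j => u j ≤ u i).card : ℤ) = R i := rfl
  have hrh : ((Finset.univ.filter fun j => Rhat j ≤ Rhat i).card : ℤ) = rhat := rfl
  rw [abs_le]
  constructor <;> omega
end

section
/- Let u_1,…,u_N be pairwise distinct keys with predicted ranks R̂(u_i), and define Δ_* as the maximum over subsets I ⊆ [N] and i ∈ I of |rank(u_i, {u_j}_{j∈I}) − rank(R̂(u_i), {R̂(u_j)}_{j∈I})|, where rank(x, V) = #{v ∈ V : v ≤ x}. Then Δ_* is attained on the full set: Δ_* = max_{i ∈ [N]} |rank(u_i, {u_j}_{j∈[N]}) − rank(R̂(u_i), {R̂(u_j)}_{j∈[N]})|. -/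
open Finset

private def errD {α : Type*} [LinearOrder α] {N : ℕ} (u : Fin N → α) (Rhat : Fin N → ℤ)
    (I : Finset (Fin N)) (i : Fin N) : ℤ :=
  ((I.filter fun j => u j ≤ u i).card : ℤ) - ((I.filter fun j => Rhat j ≤ Rhat i).card : ℤ)

private lemma errD_step {α : Type*} [LinearOrder α] {N : ℕ} (u : Fin N → α)
    (hu : Function.Injective u) (Rhat : Fin N → ℤ) (I : Finset (Fin N)) (i k : Fin N)
    (hi : i ∈ I) (hk : k ∉ I) :
    (errD u Rhat I i).natAbs ≤
      max (errD u Rhat (insert k I) i).natAbs (errD u Rhat (insert k I) k).natAbs := by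
  have hki : k ≠ i := fun h => hk (h ▸ hi)
  have hkfu : k ∉ I.filter fun j => u j ≤ u i := fun h => hk (Finset.mem_of_mem_filter _ h)
  have hkfr : k ∉ I.filter fun j => Rhat j ≤ Rhat i := fun h => hk (Finset.mem_of_mem_filter _ h)
  by_cases hu1 : u k ≤ u i <;> by_cases hr1 : Rhat k ≤ Rhat i
  · -- both counts increase by 1 : error at i unchanged
    have h1 : ((insert k I).filter fun j => u j ≤ u i).card
        = (I.filter fun j => u j ≤ u i).card + 1 := by
      rw [Finset.filter_insert, if_pos hu1, Finset.card_insert_of_notMem hkfu]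
    have h2 : ((insert k I).filter fun j => Rhat j ≤ Rhat i).card
        = (I.filter fun j => Rhat j ≤ Rhat i).card + 1 := by
      rw [Finset.filter_insert, if_pos hr1, Finset.card_insert_of_notMem hkfr]
    simp only [errD, h1, h2]
    omega
  · -- u k < u i, Rhat i < Rhat k : error at i goes up by 1, error at k goes down past it
    have hlt : u k < u i := lt_of_le_of_ne hu1 (fun h => hki (hu h))
    have h1 : ((insert k I).filter fun j => u j ≤ u i).card
        = (I.filter fun j => u j ≤ u i).card + 1 := by
      rw [Finset.filter_insert, if_pos hu1, Finset.card_insert_of_notMem hkfu]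
    have h2 : ((insert k I).filter fun j => Rhat j ≤ Rhat i).card
        = (I.filter fun j => Rhat j ≤ Rhat i).card := by
      rw [Finset.filter_insert, if_neg hr1]
    -- bounds for error at k
    have hifu : i ∈ I.filter fun j => u j ≤ u i := Finset.mem_filter.2 ⟨hi, le_refl _⟩
    have hsub1 : ((insert k I).filter fun j => u j ≤ u k)
        ⊆ insert k ((I.filter fun j => u j ≤ u i).erase i) := by
      intro j hj
      rcases Finset.mem_filter.1 hj with ⟨hjmem, hjle⟩
      rcases Finset.mem_insert.1 hjmem with h | h
      · exact Finset.mem_insert.2 (Or.inl h)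
      · refine Finset.mem_insert.2 (Or.inr (Finset.mem_erase.2 ⟨?_, Finset.mem_filter.2 ⟨h, le_of_lt (lt_of_le_of_lt hjle hlt)⟩⟩))
        intro hji
        exact absurd (hji ▸ hjle) (not_le.2 hlt)
    have hc1 : ((insert k I).filter fun j => u j ≤ u k).card
        ≤ ((I.filter fun j => u j ≤ u i).erase i).card + 1 :=
      le_trans (Finset.card_le_card hsub1) (Finset.card_insert_le _ _)
    have hc1' : ((I.filter fun j => u j ≤ u i).erase i).card
        = (I.filter fun j => u j ≤ u i).card - 1 := Finset.card_erase_of_mem hifu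
    have hpos : 0 < (I.filter fun j => u j ≤ u i).card := Finset.card_pos.2 ⟨i, hifu⟩
    have hsub2 : insert k (I.filter fun j => Rhat j ≤ Rhat i)
        ⊆ (insert k I).filter fun j => Rhat j ≤ Rhat k := by
      intro j hj
      rcases Finset.mem_insert.1 hj with h | h
      · subst h; exact Finset.mem_filter.2 ⟨Finset.mem_insert_self _ _, le_refl _⟩
      · rcases Finset.mem_filter.1 h with ⟨hjm, hjle⟩
        exact Finset.mem_filter.2 ⟨Finset.mem_insert_of_mem hjm,
          le_of_lt (lt_of_le_of_lt hjle (not_le.1 hr1))⟩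
    have hc2 : (I.filter fun j => Rhat j ≤ Rhat i).card + 1
        ≤ ((insert k I).filter fun j => Rhat j ≤ Rhat k).card := by
      rw [← Finset.card_insert_of_notMem hkfr]
      exact Finset.card_le_card hsub2
    simp only [errD, h1, h2]
    omega
  · -- u i < u k, Rhat k ≤ Rhat i : error at i goes down by 1, error at k at least as large
    have hlt : u i < u k := lt_of_not_ge hu1
    have h1 : ((insert k I).filter fun j => u j ≤ u i).card
        = (I.filter fun j => u j ≤ u i).card := by
      rw [Finset.filter_insert, if_neg hu1]
    have h2 : ((insert k I).filter fun j => Rhat j ≤ Rhat i).card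
        = (I.filter fun j => Rhat j ≤ Rhat i).card + 1 := by
      rw [Finset.filter_insert, if_pos hr1, Finset.card_insert_of_notMem hkfr]
    have hsub1 : insert k (I.filter fun j => u j ≤ u i)
        ⊆ (insert k I).filter fun j => u j ≤ u k := by
      intro j hj
      rcases Finset.mem_insert.1 hj with h | h
      · subst h; exact Finset.mem_filter.2 ⟨Finset.mem_insert_self _ _, le_refl _⟩
      · rcases Finset.mem_filter.1 h with ⟨hjm, hjle⟩
        exact Finset.mem_filter.2 ⟨Finset.mem_insert_of_mem hjm, le_of_lt (lt_of_le_of_lt hjle hlt)⟩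
    have hc1 : (I.filter fun j => u j ≤ u i).card + 1
        ≤ ((insert k I).filter fun j => u j ≤ u k).card := by
      rw [← Finset.card_insert_of_notMem hkfu]
      exact Finset.card_le_card hsub1
    have hsub2 : ((insert k I).filter fun j => Rhat j ≤ Rhat k)
        ⊆ insert k (I.filter fun j => Rhat j ≤ Rhat i) := by
      intro j hj
      rcases Finset.mem_filter.1 hj with ⟨hjmem, hjle⟩
      rcases Finset.mem_insert.1 hjmem with h | h
      · exact Finset.mem_insert.2 (Or.inl h)
      · exact Finset.mem_insert.2 (Or.inr (Finset.mem_filter.2 ⟨h, le_trans hjle hr1⟩))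
    have hc2 : ((insert k I).filter fun j => Rhat j ≤ Rhat k).card
        ≤ (I.filter fun j => Rhat j ≤ Rhat i).card + 1 := by
      rw [← Finset.card_insert_of_notMem hkfr]
      exact Finset.card_le_card hsub2
    simp only [errD, h1, h2]
    omega
  · -- neither count increases : unchanged
    have h1 : ((insert k I).filter fun j => u j ≤ u i).card
        = (I.filter fun j => u j ≤ u i).card := by
      rw [Finset.filter_insert, if_neg hu1]
    have h2 : ((insert k I).filter fun j => Rhat j ≤ Rhat i).card
        = (I.filter fun j => Rhat j ≤ Rhat i).card := by
      rw [Finset.filter_insert, if_neg hr1]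
    simp only [errD, h1, h2]
    omega

private lemma errD_le_sup {α : Type*} [LinearOrder α] {N : ℕ} (u : Fin N → α)
    (hu : Function.Injective u) (Rhat : Fin N → ℤ) :
    ∀ n (I : Finset (Fin N)), (Finset.univ \ I).card = n → ∀ i ∈ I,
      (errD u Rhat I i).natAbs
        ≤ Finset.univ.sup fun j : Fin N => (errD u Rhat Finset.univ j).natAbs := by
  intro n
  induction n with
  | zero =>
    intro I hI i hi
    have : Finset.univ ⊆ I := by
      intro x hx
      by_contra hxI
      exact absurd (Finset.card_eq_zero.1 hI ▸ Finset.mem_sdiff.2 ⟨hx, hxI⟩) (Finset.notMem_empty x)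
    have hIu : I = Finset.univ := Finset.eq_univ_of_forall (fun x => this (Finset.mem_univ x))
    subst hIu
    exact Finset.le_sup (f := fun j : Fin N => (errD u Rhat Finset.univ j).natAbs) (Finset.mem_univ i)
  | succ n ih =>
    intro I hI i hi
    have hne : (Finset.univ \ I).Nonempty := Finset.card_pos.1 (hI ▸ Nat.succ_pos n)
    obtain ⟨k, hk⟩ := hne
    rcases Finset.mem_sdiff.1 hk with ⟨-, hkI⟩
    have hcard : (Finset.univ \ insert k I).card = n := by
      have : Finset.univ \ insert k I = (Finset.univ \ I).erase k := by
        ext x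
        simp only [Finset.mem_sdiff, Finset.mem_insert, Finset.mem_erase, Finset.mem_univ,
          true_and]
        tauto
      rw [this, Finset.card_erase_of_mem hk, hI]
      omega
    have h1 := ih (insert k I) hcard i (Finset.mem_insert_of_mem hi)
    have h2 := ih (insert k I) hcard k (Finset.mem_insert_self k I)
    have := errD_step u hu Rhat I i k hi hkI
    omega

theorem stmt_8 {α : Type*} [LinearOrder α] (N : ℕ) (u : Fin N → α)
    (hu : Function.Injective u) (Rhat : Fin N → ℤ) :
    (Finset.univ.sup fun p : Finset (Fin N) × Fin N =>
      if p.2 ∈ p.1 then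
        (((p.1.filter fun j => u j ≤ u p.2).card : ℤ)
          - ((p.1.filter fun j => Rhat j ≤ Rhat p.2).card : ℤ)).natAbs
      else 0)
    = Finset.univ.sup fun i : Fin N =>
        (((Finset.univ.filter fun j => u j ≤ u i).card : ℤ)
          - ((Finset.univ.filter fun j => Rhat j ≤ Rhat i).card : ℤ)).natAbs := by
  apply le_antisymm
  · apply Finset.sup_le
    rintro ⟨I, i⟩ -
    dsimp only
    split
    · exact errD_le_sup u hu Rhat _ I rfl i (by assumption)
    · exact Nat.zero_le _
  · apply Finset.sup_le
    intro i _
    have h := Finset.le_sup (f := fun p : Finset (Fin N) × Fin N =>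
      if p.2 ∈ p.1 then
        (((p.1.filter fun j => u j ≤ u p.2).card : ℤ)
          - ((p.1.filter fun j => Rhat j ≤ Rhat p.2).card : ℤ)).natAbs
      else 0) (Finset.mem_univ ((Finset.univ : Finset (Fin N)), i))
    simpa [Finset.mem_univ] using h
end

section
/- Let u_1,…,u_N be pairwise distinct keys whose true ranks form a permutation of [N], with predicted ranks R̂(u_i) satisfying max_j |Rank(u_j) − R̂(u_j)| ≤ η. Then for every subset I ⊆ [N] and every i ∈ I, |rank(u_i, {u_j}_{j∈I}) − rank(R̂(u_i), {R̂(u_j)}_{j∈I})| ≤ 2η. -/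
theorem stmt_9 {α : Type*} [LinearOrder α] (N : ℕ) (u : Fin N → α)
    (hu : Function.Injective u) (Rhat : Fin N → ℤ) (η : ℤ)
    (herr : ∀ j, |((Finset.univ.filter fun k => u k ≤ u j).card : ℤ) - Rhat j| ≤ η) :
    ∀ I : Finset (Fin N), ∀ i ∈ I,
      |((I.filter fun j => u j ≤ u i).card : ℤ)
        - ((I.filter fun j => Rhat j ≤ Rhat i).card : ℤ)| ≤ 2 * η := by
  intro I i hi
  have hη : 0 ≤ η := le_trans (abs_nonneg _) (herr i)
  set Rank : Fin N → ℤ := fun j => ((Finset.univ.filter fun k => u k ≤ u j).card : ℤ)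
    with hRank
  have hmono : ∀ j k : Fin N, u j ≤ u k → Rank j ≤ Rank k := by
    intro j k h
    have : (Finset.univ.filter fun m => u m ≤ u j) ⊆
        (Finset.univ.filter fun m => u m ≤ u k) := by
      intro x hx
      simp only [Finset.mem_filter] at hx ⊢
      exact ⟨hx.1, hx.2.trans h⟩
    simp only [hRank]
    exact_mod_cast Finset.card_le_card this
  have hstrict : ∀ j k : Fin N, u j < u k → Rank j < Rank k := by
    intro j k h
    have hsub : (Finset.univ.filter fun m => u m ≤ u j) ⊂
        (Finset.univ.filter fun m => u m ≤ u k) := by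
      rw [Finset.ssubset_iff_of_subset]
      · refine ⟨k, by simp, ?_⟩
        simp only [Finset.mem_filter, Finset.mem_univ, true_and]
        exact not_le.mpr h
      · intro x hx
        simp only [Finset.mem_filter] at hx ⊢
        exact ⟨hx.1, hx.2.trans h.le⟩
    simp only [hRank]
    exact_mod_cast Finset.card_lt_card hsub
  have herr' : ∀ j, |Rank j - Rhat j| ≤ η := herr
  have hinj : Function.Injective Rank := by
    intro j k h
    by_contra hne
    rcases lt_or_gt_of_ne (fun he : u j = u k => hne (hu he)) with hlt | hlt
    · exact absurd h (ne_of_lt (hstrict _ _ hlt))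
    · exact absurd h.symm (ne_of_lt (hstrict _ _ hlt))
  set A := I.filter fun j => u j ≤ u i with hA
  set B := I.filter fun j => Rhat j ≤ Rhat i with hB
  have hRi_ub : Rank i ≤ Rhat i + η := by have := abs_le.mp (herr' i); linarith [this.1]
  have hRi_lb : Rhat i - η ≤ Rank i := by have := abs_le.mp (herr' i); linarith [(abs_le.mp (herr' i)).2]
  have hwin : ∀ (S : Finset (Fin N)),
      (∀ j ∈ S, Rank j ∈ Finset.Ioc (Rhat i - η) (Rhat i + η)) → (S.card : ℤ) ≤ 2 * η := by
    intro S hS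
    have := Finset.card_le_card_of_injOn Rank hS (hinj.injOn)
    calc (S.card : ℤ) ≤ ((Finset.Ioc (Rhat i - η) (Rhat i + η)).card : ℤ) := by exact_mod_cast this
    _ = (Rhat i + η) - (Rhat i - η) := by
      rw [Int.card_Ioc, Int.toNat_of_nonneg (by linarith)]
    _ = 2 * η := by ring
  have hAB : ((A \ B).card : ℤ) ≤ 2 * η := by
    apply hwin
    intro j hj
    simp only [Finset.mem_sdiff, hA, hB, Finset.mem_filter] at hj
    obtain ⟨⟨hjI, hju⟩, hnb⟩ := hj
    have hR : Rhat i < Rhat j := by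
      by_contra h'
      exact hnb ⟨hjI, not_lt.mp h'⟩
    have h1 : Rank j ≤ Rank i := hmono _ _ hju
    have h2 := abs_le.mp (herr' j)
    simp only [Finset.mem_Ioc]
    constructor <;> linarith [h2.1, h2.2]
  have hBA : ((B \ A).card : ℤ) ≤ 2 * η := by
    apply hwin
    intro j hj
    simp only [Finset.mem_sdiff, hA, hB, Finset.mem_filter] at hj
    obtain ⟨⟨hjI, hjR⟩, hnb⟩ := hj
    have hju : u i < u j := by
      by_contra h'
      exact hnb ⟨hjI, not_lt.mp h'⟩
    have h1 : Rank i < Rank j := hstrict _ _ hju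
    have h2 := abs_le.mp (herr' j)
    simp only [Finset.mem_Ioc]
    constructor <;> linarith [h2.1, h2.2]
  have hcardA : (A.card : ℤ) = (A \ B).card + (A ∩ B).card := by
    exact_mod_cast (Finset.card_sdiff_add_card_inter A B).symm
  have hcardB : (B.card : ℤ) = (B \ A).card + (B ∩ A).card := by
    exact_mod_cast (Finset.card_sdiff_add_card_inter B A).symm
  have hint : (A ∩ B).card = (B ∩ A).card := by rw [Finset.inter_comm]
  rw [abs_le]
  constructor
  · have := (Nat.cast_nonneg (A \ B).card : (0:ℤ) ≤ _)
    rw [hcardA, hcardB, hint]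
    linarith
  · have := (Nat.cast_nonneg (B \ A).card : (0:ℤ) ≤ _)
    rw [hcardA, hcardB, hint]
    linarith
end

section
/- Let a_1,…,a_n be distinct keys with true ranks Rank_i, predicted ranks R̂_i, errors η_i = |Rank_i − R̂_i|, and π a permutation with R̂_{π(1)} ≤ … ≤ R̂_{π(n)}. Then for all i ∈ {2,…,n}: |rank(a_{π(i)}, A^π_{i−1}) − rank(a_{π(i−1)}, A^π_{i−1})| ≤ η_{π(i−1)} + η_{π(i)} + (R̂_{π(i)} − R̂_{π(i−1)}), where A^π_{i−1} = {a_{π(j)} : j < i}. -/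
theorem stmt_11 {α : Type*} [LinearOrder α] (n : ℕ) (a : Fin n → α)
    (ha : Function.Injective a) (Rhat : Fin n → ℤ) (π : Equiv.Perm (Fin n))
    (hsort : Monotone fun i => Rhat (π i))
    (Rank : Fin n → ℤ) (hRank : ∀ i, Rank i = ((Finset.univ.filter fun k => a k ≤ a i).card : ℤ))
    (η : Fin n → ℤ) (hη : ∀ i, η i = |Rank i - Rhat i|) :
    ∀ i j : Fin n, (j : ℕ) + 1 = (i : ℕ) →
      |(((Finset.univ.filter fun k : Fin n => (k : ℕ) < (i : ℕ) ∧ a (π k) ≤ a (π i))).card : ℤ)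
        - (((Finset.univ.filter fun k : Fin n => (k : ℕ) < (i : ℕ) ∧ a (π k) ≤ a (π j))).card : ℤ)|
      ≤ η (π j) + η (π i) + (Rhat (π i) - Rhat (π j)) := by
  intro i j hij
  have hjlei : j ≤ i := by
    rw [Fin.le_def]; omega
  have hmono : Rhat (π j) ≤ Rhat (π i) := hsort hjlei
  -- counting over a ∘ π equals counting over a
  have hperm : ∀ x : α, ((Finset.univ.filter fun k => a (π k) ≤ x).card)
      = ((Finset.univ.filter fun k => a k ≤ x).card) := by
    intro x
    apply Finset.card_bij (fun k _ => π k)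
    · intro k hk
      simp only [Finset.mem_filter, Finset.mem_univ, true_and] at hk ⊢
      exact hk
    · intro k1 _ k2 _ h
      exact π.injective h
    · intro m hm
      refine ⟨π.symm m, ?_, by simp⟩
      simp only [Finset.mem_filter, Finset.mem_univ, true_and] at hm ⊢
      simpa using hm
  -- splitting identity
  have key : ∀ (s : Finset (Fin n)) (x y : α), x ≤ y →
      ((s.filter fun k => a (π k) ≤ y).card : ℤ) - ((s.filter fun k => a (π k) ≤ x).card : ℤ)
        = ((s.filter fun k => x < a (π k) ∧ a (π k) ≤ y).card : ℤ) := by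
    intro s x y hxy
    have hsplit : s.filter (fun k => a (π k) ≤ y)
        = s.filter (fun k => a (π k) ≤ x) ∪ s.filter (fun k => x < a (π k) ∧ a (π k) ≤ y) := by
      ext k
      simp only [Finset.mem_filter, Finset.mem_union]
      constructor
      · rintro ⟨hk, hky⟩
        rcases le_or_gt (a (π k)) x with h | h
        · exact Or.inl ⟨hk, h⟩
        · exact Or.inr ⟨hk, h, hky⟩
      · rintro (⟨hk, h⟩ | ⟨hk, _, h2⟩)
        · exact ⟨hk, le_trans h hxy⟩
        · exact ⟨hk, h2⟩
    have hdisj : Disjoint (s.filter fun k => a (π k) ≤ x)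
        (s.filter fun k => x < a (π k) ∧ a (π k) ≤ y) := by
      rw [Finset.disjoint_left]
      intro k hk hk'
      simp only [Finset.mem_filter] at hk hk'
      exact absurd hk.2 (not_le.mpr hk'.2.1)
    rw [hsplit, Finset.card_union_of_disjoint hdisj]
    push_cast; ring
  set s : Finset (Fin n) := Finset.univ.filter (fun k : Fin n => (k : ℕ) < (i : ℕ)) with hs
  have hrw : ∀ x : α, (Finset.univ.filter fun k : Fin n => (k : ℕ) < (i : ℕ) ∧ a (π k) ≤ x)
      = s.filter (fun k => a (π k) ≤ x) := by
    intro x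
    rw [hs, Finset.filter_filter]
  rw [hrw, hrw]
  -- interval count on prefix is at most global interval count
  have hcardmono : ∀ x y : α,
      ((s.filter fun k => x < a (π k) ∧ a (π k) ≤ y).card : ℤ)
        ≤ ((Finset.univ.filter fun k => x < a (π k) ∧ a (π k) ≤ y).card : ℤ) := by
    intro x y
    exact_mod_cast Finset.card_le_card
      (Finset.filter_subset_filter _ (Finset.subset_univ s))
  -- global difference equals rank difference
  have hglob : ∀ x y : Fin n, a x ≤ a y →
      ((Finset.univ.filter fun k => a x < a (π k) ∧ a (π k) ≤ a y).card : ℤ)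
        = Rank y - Rank x := by
    intro x y hxy
    rw [hRank, hRank, ← hperm (a y), ← hperm (a x), ← key Finset.univ (a x) (a y) hxy]
  have hetai : Rank (π i) - Rhat (π i) ≤ η (π i) := by rw [hη]; exact le_abs_self _
  have hetai' : Rhat (π i) - Rank (π i) ≤ η (π i) := by rw [hη]; rw [abs_sub_comm]; exact le_abs_self _
  have hetaj : Rank (π j) - Rhat (π j) ≤ η (π j) := by rw [hη]; exact le_abs_self _
  have hetaj' : Rhat (π j) - Rank (π j) ≤ η (π j) := by rw [hη]; rw [abs_sub_comm]; exact le_abs_self _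
  rcases le_total (a (π j)) (a (π i)) with hle | hle
  · have h1 := key s (a (π j)) (a (π i)) hle
    have h2 := hcardmono (a (π j)) (a (π i))
    have h3 := hglob (π j) (π i) hle
    have hpos : (0 : ℤ) ≤ ((s.filter fun k => a (π j) < a (π k) ∧ a (π k) ≤ a (π i)).card : ℤ) :=
      Int.natCast_nonneg _
    rw [abs_of_nonneg (by linarith [h1, hpos])]
    linarith
  · have h1 := key s (a (π i)) (a (π j)) hle
    have h2 := hcardmono (a (π i)) (a (π j))
    have h3 := hglob (π i) (π j) hle
    have hpos : (0 : ℤ) ≤ ((s.filter fun k => a (π i) < a (π k) ∧ a (π k) ≤ a (π j)).card : ℤ) :=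
      Int.natCast_nonneg _
    rw [abs_sub_comm, abs_of_nonneg (by linarith [h1, hpos])]
    linarith
end

section
/- If a_1,…,a_n are distinct keys, R̂ is a permutation of [n] giving predicted ranks, η_i = |Rank_i − R̂_i| ≤ 2^ξ − 2 for all i (i.e., log₂(η_i + 2) ≤ ξ), and π sorts keys by predicted rank, then the pointer prediction error η'_i = |rank(a_{π(i)}, A^π_{i−1}) − rank(a_{π(i−1)}, A^π_{i−1})| satisfies log₂(η'_i + 2) ≤ 2ξ for all i ∈ {2,…,n}. -/
/-!
Write `c_V(x) = #{v ∈ V : v ≤ x}`. For `V ⊆ W` the increment `c_V(y) - c_V(x)` counts the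
elements of `V` in the interval `(x, y]`, so it is dominated by the increment of `c_W`. With
`V` the keys placed before position `i` and `W` all keys, the pointer error at `i` is therefore
at most the distance of the global ranks of the two consecutive keys `a (π (i - 1))` and
`a (π i)`. Their predicted ranks are `i` and `i + 1`, so this distance is at most
`η_{π(i-1)} + η_{π(i)} + 1`, and `log₂ (α + β + 3) ≤ log₂ (α + 2) + log₂ (β + 2)`.
-/

open Finset

section CountLE

variable {ι β : Type*} [LinearOrder β] (f : ι → β)

theorem card_filter_le_sub_card_filter_le_le_of_subset {s t : Finset ι} (hst : s ⊆ t)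
    {x y : β} (hxy : x ≤ y) :
    (#(s.filter (f · ≤ y)) : ℤ) - #(s.filter (f · ≤ x)) ≤
      #(t.filter (f · ≤ y)) - #(t.filter (f · ≤ x)) := by
  classical
  have hs : s.filter (f · ≤ x) ⊆ s.filter (f · ≤ y) :=
    monotone_filter_right s fun _ _ h => h.trans hxy
  have ht : t.filter (f · ≤ x) ⊆ t.filter (f · ≤ y) :=
    monotone_filter_right t fun _ _ h => h.trans hxy
  have hsdiff : s.filter (f · ≤ y) \ s.filter (f · ≤ x) ⊆
      t.filter (f · ≤ y) \ t.filter (f · ≤ x) := by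
    intro k
    simp only [mem_sdiff, mem_filter]
    exact fun ⟨⟨hk, hky⟩, hkx⟩ => ⟨⟨hst hk, hky⟩, fun h => hkx ⟨hk, h.2⟩⟩
  have := card_le_card hsdiff
  rw [card_sdiff_of_subset hs, card_sdiff_of_subset ht] at this
  have := card_le_card hs
  have := card_le_card ht
  omega

theorem abs_card_filter_le_sub_le_of_subset {s t : Finset ι} (hst : s ⊆ t) (x y : β) :
    |(#(s.filter (f · ≤ y)) : ℤ) - #(s.filter (f · ≤ x))| ≤
      |(#(t.filter (f · ≤ y)) : ℤ) - #(t.filter (f · ≤ x))| := by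
  have mono : ∀ u : Finset ι, Monotone fun z => (#(u.filter (f · ≤ z)) : ℤ) :=
    fun u _ _ h => Nat.cast_le.mpr (card_le_card (monotone_filter_right u fun _ _ hk => hk.trans h))
  rcases le_total x y with hxy | hyx
  · rw [abs_of_nonneg (sub_nonneg.mpr (mono s hxy)),
      abs_of_nonneg (sub_nonneg.mpr (mono t hxy))]
    exact card_filter_le_sub_card_filter_le_le_of_subset f hst hxy
  · rw [abs_sub_comm, abs_sub_comm (#(t.filter _) : ℤ),
      abs_of_nonneg (sub_nonneg.mpr (mono s hyx)), abs_of_nonneg (sub_nonneg.mpr (mono t hyx))]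
    exact card_filter_le_sub_card_filter_le_le_of_subset f hst hyx

end CountLE

theorem Real.logb_add_two_le_of_le_add_add_one {b d x y : ℝ} (hb : 1 < b) (hd : 0 ≤ d)
    (hx : 0 ≤ x) (hy : 0 ≤ y) (h : d ≤ x + y + 1) :
    logb b (d + 2) ≤ logb b (x + 2) + logb b (y + 2) := by
  rw [← logb_mul (by positivity) (by positivity)]
  exact logb_le_logb_of_le hb (by positivity) (by nlinarith)

theorem stmt_12_general {α : Type*} [LinearOrder α] (n : ℕ) (a : Fin n → α)
    (Rhat : Fin n → ℕ) (π : Equiv.Perm (Fin n))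
    (hperm : ∀ i : Fin n, Rhat (π i) = (i : ℕ) + 1)
    (Rank : Fin n → ℕ) (hRank : ∀ i, Rank i = (Finset.univ.filter fun k => a k ≤ a i).card)
    (η : Fin n → ℕ) (hη : ∀ i, (η i : ℤ) = |(Rank i : ℤ) - (Rhat i : ℤ)|)
    (ξ : ℝ) (herr : ∀ i, Real.logb 2 ((η i : ℝ) + 2) ≤ ξ) :
    ∀ i j : Fin n, (j : ℕ) + 1 = (i : ℕ) →
      Real.logb 2
        ((((((Finset.univ.filter fun k : Fin n => (k : ℕ) < (i : ℕ) ∧ a (π k) ≤ a (π i))).card : ℤ)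
          - (((Finset.univ.filter fun k : Fin n => (k : ℕ) < (i : ℕ) ∧ a (π k) ≤ a (π j))).card : ℤ)).natAbs
          : ℝ) + 2) ≤ 2 * ξ := by
  intro i j hij
  have hRank_perm : ∀ m, #(univ.filter fun k => a (π k) ≤ a (π m)) = Rank (π m) := fun m =>
    (card_equiv π (by simp)).trans (hRank (π m)).symm
  have hprefix := abs_card_filter_le_sub_le_of_subset (a ∘ π)
    (filter_subset (fun k : Fin n => (k : ℕ) < i) univ) (a (π j)) (a (π i))
  simp only [filter_filter, Function.comp_apply, hRank_perm] at hprefix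
  have hglobal : |(Rank (π i) : ℤ) - Rank (π j)| ≤ η (π i) + η (π j) + 1 := by
    obtain ⟨hi₁, hi₂⟩ := abs_le.mp (hη (π i)).ge
    obtain ⟨hj₁, hj₂⟩ := abs_le.mp (hη (π j)).ge
    rw [hperm] at hi₁ hi₂ hj₁ hj₂
    rw [abs_le]
    constructor <;> omega
  calc _ ≤ Real.logb 2 ((η (π i) : ℝ) + 2) + Real.logb 2 ((η (π j) : ℝ) + 2) :=
        Real.logb_add_two_le_of_le_add_add_one one_lt_two (by positivity) (by positivity)
          (by positivity) (by rw [Nat.cast_natAbs]; exact_mod_cast hprefix.trans hglobal)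
    _ ≤ 2 * ξ := by linarith [herr (π i), herr (π j)]

theorem stmt_12 {α : Type*} [LinearOrder α] (n : ℕ) (a : Fin n → α)
    (ha : Function.Injective a) (Rhat : Fin n → ℕ) (π : Equiv.Perm (Fin n))
    (hperm : ∀ i : Fin n, Rhat (π i) = (i : ℕ) + 1)
    (Rank : Fin n → ℕ) (hRank : ∀ i, Rank i = (Finset.univ.filter fun k => a k ≤ a i).card)
    (η : Fin n → ℕ) (hη : ∀ i, (η i : ℤ) = |(Rank i : ℤ) - (Rhat i : ℤ)|)
    (ξ : ℝ) (herr : ∀ i, Real.logb 2 ((η i : ℝ) + 2) ≤ ξ) :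
    ∀ i j : Fin n, (j : ℕ) + 1 = (i : ℕ) →
      Real.logb 2
        ((((((Finset.univ.filter fun k : Fin n => (k : ℕ) < (i : ℕ) ∧ a (π k) ≤ a (π i))).card : ℤ)
          - (((Finset.univ.filter fun k : Fin n => (k : ℕ) < (i : ℕ) ∧ a (π k) ≤ a (π j))).card : ℤ)).natAbs
          : ℝ) + 2) ≤ 2 * ξ :=
  stmt_12_general n a Rhat π hperm Rank hRank η hη ξ herr
end

section
/- Let L be the number of levels of a binary heap, where level ℓ < L contains 2^{ℓ−1} keys. Given integers ξ^ℓ_i ∈ {0,1} for ℓ ∈ [L−1], i ∈ [2^{ℓ−1}], with total sum ∑_{ℓ=1}^{L−1} ∑_{i=1}^{2^{ℓ−1}} ξ^ℓ_i = η, the quantity ∑_{ℓ=1}^{L−1} 2^{−(ℓ−1)} ∑_{i=1}^{2^{ℓ−1}} ξ^ℓ_i is at most ⌈log₂(η+1)⌉. -/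
theorem stmt_16 (L η : ℕ) (ξ : ℕ → ℕ → ℕ)
    (hbin : ∀ ℓ i, ξ ℓ i ≤ 1)
    (hsum : ∑ ℓ ∈ Finset.Icc 1 (L - 1), ∑ i ∈ Finset.range (2 ^ (ℓ - 1)), ξ ℓ i = η) :
    ∑ ℓ ∈ Finset.Icc 1 (L - 1),
        ((∑ i ∈ Finset.range (2 ^ (ℓ - 1)), ξ ℓ i : ℝ) / 2 ^ (ℓ - 1))
      ≤ (⌈Real.logb 2 ((η : ℝ) + 1)⌉₊ : ℝ) := by
  set k := ⌈Real.logb 2 ((η : ℝ) + 1)⌉₊ with hk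
  set s : ℕ → ℝ := fun ℓ => (∑ i ∈ Finset.range (2 ^ (ℓ - 1)), ξ ℓ i : ℝ) with hsdef
  show ∑ ℓ ∈ Finset.Icc 1 (L - 1), s ℓ / 2 ^ (ℓ - 1) ≤ (k : ℝ)
  have hs_nonneg : ∀ ℓ, 0 ≤ s ℓ := fun ℓ => by positivity
  have hs_le : ∀ ℓ, s ℓ ≤ 2 ^ (ℓ - 1) := by
    intro ℓ
    have h1 : (∑ i ∈ Finset.range (2 ^ (ℓ - 1)), ξ ℓ i) ≤ 2 ^ (ℓ - 1) := by
      calc (∑ i ∈ Finset.range (2 ^ (ℓ - 1)), ξ ℓ i)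
          ≤ ∑ _i ∈ Finset.range (2 ^ (ℓ - 1)), 1 :=
            Finset.sum_le_sum fun i _ => hbin ℓ i
        _ = 2 ^ (ℓ - 1) := by simp
    have h2 : ((∑ i ∈ Finset.range (2 ^ (ℓ - 1)), ξ ℓ i : ℕ) : ℝ) ≤ ((2 ^ (ℓ - 1) : ℕ) : ℝ) :=
      Nat.cast_le.mpr h1
    push_cast at h2
    exact h2
  have hη : (η : ℝ) + 1 ≤ 2 ^ k := by
    have h1 : Real.logb 2 ((η : ℝ) + 1) ≤ (k : ℝ) := Nat.le_ceil _
    calc (η : ℝ) + 1 = 2 ^ Real.logb 2 ((η : ℝ) + 1) :=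
          (Real.rpow_logb (by norm_num) (by norm_num) (by positivity)).symm
      _ ≤ (2 : ℝ) ^ (k : ℝ) := Real.rpow_le_rpow_of_exponent_le (by norm_num) h1
      _ = 2 ^ k := by rw [Real.rpow_natCast]
  have hterm_le_one : ∀ ℓ, s ℓ / 2 ^ (ℓ - 1) ≤ 1 := by
    intro ℓ
    rw [div_le_one (by positivity)]
    exact hs_le ℓ
  by_cases hLk : L - 1 ≤ k
  · calc ∑ ℓ ∈ Finset.Icc 1 (L - 1), s ℓ / 2 ^ (ℓ - 1)
        ≤ ∑ _ℓ ∈ Finset.Icc 1 (L - 1), (1 : ℝ) :=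
          Finset.sum_le_sum fun ℓ _ => hterm_le_one ℓ
      _ = ((L - 1 : ℕ) : ℝ) := by simp [Nat.card_Icc]
      _ ≤ (k : ℝ) := by exact_mod_cast hLk
  · push_neg at hLk
    have hkL : k ≤ L - 1 := le_of_lt hLk
    have hsplit : ∀ (f : ℕ → ℝ), ∑ ℓ ∈ Finset.Icc 1 (L - 1), f ℓ
        = ∑ ℓ ∈ Finset.Ioc 0 k, f ℓ + ∑ ℓ ∈ Finset.Ioc k (L - 1), f ℓ := by
      intro f
      have hIcc : Finset.Icc 1 (L - 1) = Finset.Ioc 0 (L - 1) := by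
        ext x; simp [Finset.mem_Icc, Finset.mem_Ioc]; omega
      rw [hIcc, ← Finset.sum_Ioc_consecutive f (Nat.zero_le k) hkL]
    have hA : ∀ ℓ ∈ Finset.Ioc 0 k, s ℓ / 2 ^ (ℓ - 1) ≤ 1 - (2 ^ (ℓ - 1) - s ℓ) / 2 ^ k := by
      intro ℓ hℓ
      simp only [Finset.mem_Ioc] at hℓ
      have hab : (2 : ℝ) ^ (ℓ - 1) ≤ 2 ^ k := by
        apply pow_le_pow_right₀ (by norm_num)
        omega
      have ha : (0 : ℝ) < 2 ^ (ℓ - 1) := by positivity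
      have h1 : s ℓ / 2 ^ (ℓ - 1) = 1 - (2 ^ (ℓ - 1) - s ℓ) / 2 ^ (ℓ - 1) := by
        field_simp
        ring
      rw [h1]
      have h2 : (2 ^ (ℓ - 1) - s ℓ) / 2 ^ k ≤ (2 ^ (ℓ - 1) - s ℓ) / 2 ^ (ℓ - 1) := by
        apply div_le_div_of_nonneg_left _ ha hab
        linarith [hs_le ℓ]
      linarith
    have hB : ∀ ℓ ∈ Finset.Ioc k (L - 1), s ℓ / 2 ^ (ℓ - 1) ≤ s ℓ / 2 ^ k := by
      intro ℓ hℓ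
      simp only [Finset.mem_Ioc] at hℓ
      apply div_le_div_of_nonneg_left (hs_nonneg ℓ) (by positivity)
      apply pow_le_pow_right₀ (by norm_num)
      omega
    have hgeom : ∑ ℓ ∈ Finset.Ioc 0 k, (2 : ℝ) ^ (ℓ - 1) = 2 ^ k - 1 := by
      induction k with
      | zero => simp
      | succ n ih =>
        rw [Finset.sum_Ioc_succ_top (Nat.zero_le _), ih]
        simp only [Nat.add_sub_cancel]
        ring
    have hAE : ∑ ℓ ∈ Finset.Ioc 0 k, s ℓ + ∑ ℓ ∈ Finset.Ioc k (L - 1), s ℓ = (η : ℝ) := by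
      rw [← hsplit s]
      simp only [hsdef]
      push_cast [← hsum]
      rfl
    have h2k : (0 : ℝ) < 2 ^ k := by positivity
    calc ∑ ℓ ∈ Finset.Icc 1 (L - 1), s ℓ / 2 ^ (ℓ - 1)
        = ∑ ℓ ∈ Finset.Ioc 0 k, s ℓ / 2 ^ (ℓ - 1)
          + ∑ ℓ ∈ Finset.Ioc k (L - 1), s ℓ / 2 ^ (ℓ - 1) := hsplit _
      _ ≤ ∑ ℓ ∈ Finset.Ioc 0 k, (1 - (2 ^ (ℓ - 1) - s ℓ) / 2 ^ k)
          + ∑ ℓ ∈ Finset.Ioc k (L - 1), s ℓ / 2 ^ k :=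
          add_le_add (Finset.sum_le_sum hA) (Finset.sum_le_sum hB)
      _ = (k : ℝ) - ((2 ^ k - 1) - ∑ ℓ ∈ Finset.Ioc 0 k, s ℓ) / 2 ^ k
          + (∑ ℓ ∈ Finset.Ioc k (L - 1), s ℓ) / 2 ^ k := by
          have e1 : ∑ x ∈ Finset.Ioc 0 k, ((2 : ℝ) ^ (x - 1) - s x)
              = (2 ^ k - 1) - ∑ x ∈ Finset.Ioc 0 k, s x := by
            rw [Finset.sum_sub_distrib, hgeom]
          rw [Finset.sum_sub_distrib, ← Finset.sum_div, e1, ← Finset.sum_div,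
            Finset.sum_const, Nat.card_Ioc]
          simp only [Nat.sub_zero]
          push_cast
          ring
      _ ≤ (k : ℝ) := by
          have hED : (∑ ℓ ∈ Finset.Ioc k (L - 1), s ℓ)
              ≤ (2 ^ k - 1) - ∑ ℓ ∈ Finset.Ioc 0 k, s ℓ := by linarith
          have h3 := (div_le_div_iff_of_pos_right h2k).mpr hED
          linarith
end

section
/- Let R̂_{π(1)} ≤ … ≤ R̂_{π(n)} be a sorted permutation of [n] and η_i ≥ 0 reals. Then ∑_{i=2}^n log₂(η_{π(i−1)} + η_{π(i)} + (R̂_{π(i)} − R̂_{π(i−1)}) + 2) ≤ 2·∑_{i=1}^n log₂(η_i + 2) + ∑_{i=2}^n (R̂_{π(i)} − R̂_{π(i−1)}) + n. -/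
lemma stmt_19_key (a b δ : ℝ) (ha : 0 ≤ a) (hb : 0 ≤ b) (hδ : 0 ≤ δ) :
    Real.logb 2 (a + b + δ + 2) ≤
      Real.logb 2 (a + 2) + Real.logb 2 (b + 2) + (δ + 1) := by
  have hL : (0.6 : ℝ) < Real.log 2 := by
    have := Real.log_two_gt_d9; linarith
  have hP : 1 + δ * Real.log 2 ≤ (2 : ℝ) ^ δ := by
    rw [Real.rpow_def_of_pos (by norm_num : (0:ℝ) < 2)]
    have h := Real.add_one_le_exp (Real.log 2 * δ)
    linarith [mul_comm δ (Real.log 2)]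
  have hPnn : (0:ℝ) ≤ (2:ℝ) ^ δ := Real.rpow_nonneg (by norm_num) δ
  have h2 : (2:ℝ) ^ (δ + 1) = (2:ℝ) ^ δ * 2 := by
    rw [Real.rpow_add (by norm_num : (0:ℝ) < 2), Real.rpow_one]
  have hprod : a + b + δ + 2 ≤ (a + 2) * (b + 2) * (2:ℝ) ^ (δ + 1) := by
    rw [h2]
    nlinarith [mul_nonneg ha hb, mul_nonneg ha hδ, mul_nonneg hb hδ,
      mul_nonneg (mul_nonneg ha hb) hδ]
  calc Real.logb 2 (a + b + δ + 2)
      ≤ Real.logb 2 ((a + 2) * (b + 2) * (2:ℝ) ^ (δ + 1)) := by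
        exact Real.logb_le_logb_of_le (by norm_num : (1:ℝ) < 2) (by linarith) hprod
    _ = Real.logb 2 ((a + 2) * (b + 2)) + Real.logb 2 ((2:ℝ) ^ (δ + 1)) := by
        rw [Real.logb_mul (by positivity) (by positivity)]
    _ = Real.logb 2 (a + 2) + Real.logb 2 (b + 2) + (δ + 1) := by
        rw [Real.logb_mul (by positivity) (by positivity),
          Real.logb_rpow (by norm_num) (by norm_num)]

theorem stmt_19 (n : ℕ) (hn : 1 ≤ n) (π : Equiv.Perm (Fin n))
    (Rhat : Fin n → ℝ) (hsort : Monotone fun i => Rhat (π i))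
    (η : Fin n → ℝ) (hη : ∀ i, 0 ≤ η i)
    (idx : ℕ → Fin n) (hidx : ∀ k : ℕ, (idx k : ℕ) = min k (n - 1)) :
    ∑ k ∈ Finset.Icc 1 (n - 1),
        Real.logb 2 (η (π (idx (k - 1))) + η (π (idx k))
          + (Rhat (π (idx k)) - Rhat (π (idx (k - 1)))) + 2)
      ≤ 2 * ∑ i : Fin n, Real.logb 2 (η i + 2)
        + ∑ k ∈ Finset.Icc 1 (n - 1), (Rhat (π (idx k)) - Rhat (π (idx (k - 1))))
        + n := by
  set F : ℕ → ℝ := fun k => Real.logb 2 (η (π (idx k)) + 2) with hF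
  have hFnn : ∀ k, 0 ≤ F k := by
    intro k
    have h2 : (1:ℝ) ≤ η (π (idx k)) + 2 := by linarith [hη (π (idx k))]
    exact Real.logb_nonneg (by norm_num) h2
  have hδnn : ∀ k ∈ Finset.Icc 1 (n-1),
      0 ≤ Rhat (π (idx k)) - Rhat (π (idx (k-1))) := by
    intro k hk
    have hle : idx (k-1) ≤ idx k := by
      rw [Fin.le_def, hidx, hidx]; omega
    have := hsort hle
    simpa using sub_nonneg.mpr this
  have step : ∀ k ∈ Finset.Icc 1 (n-1),
      Real.logb 2 (η (π (idx (k - 1))) + η (π (idx k))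
          + (Rhat (π (idx k)) - Rhat (π (idx (k - 1)))) + 2)
        ≤ F (k-1) + F k + ((Rhat (π (idx k)) - Rhat (π (idx (k-1)))) + 1) := by
    intro k hk
    have := stmt_19_key (η (π (idx (k-1)))) (η (π (idx k)))
      (Rhat (π (idx k)) - Rhat (π (idx (k-1)))) (hη _) (hη _) (hδnn k hk)
    simpa [hF, add_assoc] using this
  have hIcc : Finset.Icc 1 (n-1) = Finset.Ico 1 n := by
    ext k; simp [Finset.mem_Icc, Finset.mem_Ico]; omega
  have hsum1 : ∑ k ∈ Finset.Icc 1 (n-1), F (k-1) ≤ ∑ k ∈ Finset.range n, F k := by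
    rw [hIcc, Finset.sum_Ico_eq_sum_range]
    simp only [add_comm 1, Nat.add_sub_cancel]
    exact Finset.sum_le_sum_of_subset_of_nonneg
      (Finset.range_subset_range.mpr (by omega)) (fun i _ _ => hFnn i)
  have hsum2 : ∑ k ∈ Finset.Icc 1 (n-1), F k ≤ ∑ k ∈ Finset.range n, F k := by
    rw [hIcc, Finset.range_eq_Ico]
    exact Finset.sum_le_sum_of_subset_of_nonneg
      (Finset.Ico_subset_Ico (by omega) le_rfl) (fun i _ _ => hFnn i)
  have hsumF : ∑ k ∈ Finset.range n, F k = ∑ i : Fin n, Real.logb 2 (η i + 2) := by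
    rw [← Fin.sum_univ_eq_sum_range F n]
    rw [← Equiv.sum_comp π (fun i => Real.logb 2 (η i + 2))]
    apply Finset.sum_congr rfl
    intro i _
    have : idx (i : ℕ) = i := by
      apply Fin.ext; rw [hidx]; omega
    rw [hF]
    simp only [this]
  have hcard : ∑ _k ∈ Finset.Icc 1 (n-1), (1:ℝ) ≤ (n : ℝ) := by
    rw [Finset.sum_const, Nat.card_Icc, nsmul_eq_mul, mul_one]
    have : (n - 1 + 1 - 1 : ℕ) ≤ n := by omega
    exact_mod_cast this
  calc ∑ k ∈ Finset.Icc 1 (n - 1),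
        Real.logb 2 (η (π (idx (k - 1))) + η (π (idx k))
          + (Rhat (π (idx k)) - Rhat (π (idx (k - 1)))) + 2)
      ≤ ∑ k ∈ Finset.Icc 1 (n-1),
          (F (k-1) + F k + ((Rhat (π (idx k)) - Rhat (π (idx (k-1)))) + 1)) :=
        Finset.sum_le_sum step
    _ = ∑ k ∈ Finset.Icc 1 (n-1), F (k-1) + ∑ k ∈ Finset.Icc 1 (n-1), F k
        + (∑ k ∈ Finset.Icc 1 (n-1), (Rhat (π (idx k)) - Rhat (π (idx (k-1))))
          + ∑ _k ∈ Finset.Icc 1 (n-1), (1:ℝ)) := by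
        rw [← Finset.sum_add_distrib, ← Finset.sum_add_distrib, ← Finset.sum_add_distrib]
    _ ≤ 2 * ∑ i : Fin n, Real.logb 2 (η i + 2)
        + ∑ k ∈ Finset.Icc 1 (n - 1), (Rhat (π (idx k)) - Rhat (π (idx (k - 1))))
        + n := by
        have := hsum1; have := hsum2
        rw [← hsumF]; linarith [hcard]
end
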